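/- Let t₁ ≤ t₂ be real numbers, E : ℝ → ℝ a differentiable function with E(s) ≥ 0 for all s ∈ [t₁,t₂], and g : ℝ → ℝ a continuous nonnegative function, and suppose E'(s) ≤ 2·g(s)·√(E(s)) for all s ∈ [t₁,t₂]. Then √(E(t₂)) ≤ √(E(t₁)) + ∫_{t₁}^{t₂} g(s) ds. -/

import Mathlib

/-!
Where `E > 0` the hypothesis says `(√E)' = E' / (2√E) ≤ g`, so integrating gives the claim.
To get around the points where `E` vanishes and `√E` is not differentiable, run this argument
for `√(E + ε)`, whose derivative `E' / (2√(E + ε))` is still at most `g`, and let `ε → 0`.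
-/

open Set Filter Topology MeasureTheory

lemma div_two_sqrt_add_le {d e γ ε : ℝ} (he : 0 ≤ e) (hγ : 0 ≤ γ) (hε : 0 < ε)
    (hd : d ≤ 2 * γ * √e) : d / (2 * √(e + ε)) ≤ γ := by
  have hsqrt : √e ≤ √(e + ε) := Real.sqrt_le_sqrt (by linarith)
  rw [div_le_iff₀ (by positivity)]
  nlinarith

section

variable {a b : ℝ} {E E' g : ℝ → ℝ}

lemma sqrt_add_sub_sqrt_add_le_integral (hab : a ≤ b) (hEc : ContinuousOn E (Icc a b))
    (hE' : ∀ s ∈ Ioo a b, HasDerivAt E (E' s) s) (hEnn : ∀ s ∈ Ioo a b, 0 ≤ E s)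
    (hg : IntegrableOn g (Icc a b)) (hgnn : ∀ s ∈ Ioo a b, 0 ≤ g s)
    (hineq : ∀ s ∈ Ioo a b, E' s ≤ 2 * g s * √(E s)) {ε : ℝ} (hε : 0 < ε) :
    √(E b + ε) - √(E a + ε) ≤ ∫ s in a..b, g s := by
  refine intervalIntegral.sub_le_integral_of_hasDeriv_right_of_le hab
    (hEc.add continuousOn_const).sqrt (fun s hs => ?_) hg
    (fun s hs => div_two_sqrt_add_le (hEnn s hs) (hgnn s hs) hε (hineq s hs))
  have hpos : E s + ε ≠ 0 := by linarith [hEnn s hs]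
  exact (((hE' s hs).add_const ε).sqrt hpos).hasDerivWithinAt

theorem sqrt_le_sqrt_add_integral_of_deriv_le (hab : a ≤ b) (hEc : ContinuousOn E (Icc a b))
    (hE' : ∀ s ∈ Ioo a b, HasDerivAt E (E' s) s) (hEnn : ∀ s ∈ Ioo a b, 0 ≤ E s)
    (hg : IntegrableOn g (Icc a b)) (hgnn : ∀ s ∈ Ioo a b, 0 ≤ g s)
    (hineq : ∀ s ∈ Ioo a b, E' s ≤ 2 * g s * √(E s)) :
    √(E b) ≤ √(E a) + ∫ s in a..b, g s := by
  have hlim : Tendsto (fun ε => √(E b + ε) - √(E a + ε)) (𝓝[>] 0) (𝓝 (√(E b) - √(E a))) := by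
    have hcont : Continuous fun ε => √(E b + ε) - √(E a + ε) := by fun_prop
    simpa using (hcont.tendsto 0).mono_left nhdsWithin_le_nhds
  have := le_of_tendsto hlim <| eventually_nhdsWithin_of_forall fun ε hε =>
    sqrt_add_sub_sqrt_add_le_integral hab hEc hE' hEnn hg hgnn hineq hε
  linarith

end

/-- square-root Grönwall: if `E ≥ 0` is differentiable with
`E' ≤ 2 g √E` on `[t₁,t₂]` and `g` continuous nonnegative, then
`√(E t₂) ≤ √(E t₁) + ∫_{t₁}^{t₂} g`. -/
theorem sqrt_gronwall (t₁ t₂ : ℝ) (h12 : t₁ ≤ t₂) (E g : ℝ → ℝ)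
    (hE : Differentiable ℝ E)
    (hEnn : ∀ s ∈ Set.Icc t₁ t₂, 0 ≤ E s)
    (hg : Continuous g) (hgnn : ∀ s : ℝ, 0 ≤ g s)
    (hineq : ∀ s ∈ Set.Icc t₁ t₂, deriv E s ≤ 2 * g s * Real.sqrt (E s)) :
    Real.sqrt (E t₂) ≤ Real.sqrt (E t₁) + ∫ s in t₁..t₂, g s :=
  sqrt_le_sqrt_add_integral_of_deriv_le h12 hE.continuous.continuousOn
    (fun s _ => (hE s).hasDerivAt) (fun s hs => hEnn s (Ioo_subset_Icc_self hs))
    hg.integrableOn_Icc (fun s _ => hgnn s) (fun s hs => hineq s (Ioo_subset_Icc_self hs))
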